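/- arXiv:2306.09933 — 3 statements merged into one kernel-verified Lean document; each statement's English description precedes it below -/
import Mathlib

section
/- Let N ≥ 1, let a₁,…,a_N ∈ ℝ³ be pairwise distinct points, let γ₁,…,γ_N and L̃ be positive real numbers, and set a_{ij} := ‖a_i − a_j‖ + δ_{ij} (Kronecker delta, so a_{ii} = 1 and a_{ij} = ‖a_i − a_j‖ for i ≠ j). If real numbers κ₁,…,κ_N satisfy, for every i ∈ {1,…,N}, Σ_{j=1}^N (γ_j κ_i − γ_i κ_j)/a_{ij} + κ_i/L̃ = 0, then κ_i = 0 for all i. -/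
/-- (Algebraic content of Lemma 10, null class.)
If `N ≥ 1`, the centres `a i ∈ ℝ³` are pairwise distinct, `γ i > 0`, `L̃ > 0`,
`a_{ij} = ‖a i − a j‖ + δ_{ij}`, and the `κ i` satisfy the linear system
`Σ_j (γ j κ i − γ i κ j)/a_{ij} + κ i / L̃ = 0` for every `i`, then all `κ i = 0`. -/
theorem kappa_vanishes (N : ℕ) (hN : 1 ≤ N)
    (a : Fin N → EuclideanSpace ℝ (Fin 3)) (ha : Function.Injective a)
    (γ : Fin N → ℝ) (hγ : ∀ i, 0 < γ i)
    (L : ℝ) (hL : 0 < L) (κ : Fin N → ℝ)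
    (hκ : ∀ i, (∑ j, (γ j * κ i - γ i * κ j) / (‖a i - a j‖ + if i = j then 1 else 0))
        + κ i / L = 0) :
    ∀ i, κ i = 0 := by
  haveI : Nonempty (Fin N) := ⟨⟨0, hN⟩⟩
  have hDpos : ∀ i j : Fin N, 0 < ‖a i - a j‖ + if i = j then 1 else 0 := by
    intro i j
    by_cases h : i = j
    · simp [h]
    · have h1 : a i ≠ a j := fun he => h (ha he)
      have h2 : 0 < ‖a i - a j‖ := by
        rw [norm_sub_pos_iff]; exact h1
      rw [if_neg h, add_zero]; exact h2
  set f : Fin N → ℝ := fun i => κ i / γ i with hf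
  obtain ⟨i0, -, hmax⟩ := Finset.exists_max_image Finset.univ f Finset.univ_nonempty
  obtain ⟨i1, -, hmin⟩ := Finset.exists_min_image Finset.univ f Finset.univ_nonempty
  -- at the maximizer, κ i0 ≤ 0
  have hmax0 : κ i0 ≤ 0 := by
    have hsum : 0 ≤ ∑ j, (γ j * κ i0 - γ i0 * κ j) / (‖a i0 - a j‖ + if i0 = j then 1 else 0) := by
      apply Finset.sum_nonneg
      intro j _
      apply div_nonneg _ (hDpos i0 j).le
      have h := hmax j (Finset.mem_univ j)
      simp only [hf] at h
      have h2 := (div_le_div_iff₀ (hγ j) (hγ i0)).1 h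
      nlinarith
    have h0 := hκ i0
    have h1 : κ i0 / L ≤ 0 := by linarith
    rcases div_nonpos_iff.mp h1 with ⟨_, h2⟩ | ⟨h2, _⟩
    · linarith
    · exact h2
  -- at the minimizer, κ i1 ≥ 0
  have hmin0 : 0 ≤ κ i1 := by
    have hsum : (∑ j, (γ j * κ i1 - γ i1 * κ j) / (‖a i1 - a j‖ + if i1 = j then 1 else 0)) ≤ 0 := by
      apply Finset.sum_nonpos
      intro j _
      apply div_nonpos_of_nonpos_of_nonneg _ (hDpos i1 j).le
      have h := hmin j (Finset.mem_univ j)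
      simp only [hf] at h
      have h2 := (div_le_div_iff₀ (hγ i1) (hγ j)).1 h
      nlinarith
    have h0 := hκ i1
    have h1 : 0 ≤ κ i1 / L := by linarith
    rcases div_nonneg_iff.mp h1 with ⟨h2, _⟩ | ⟨_, h2⟩
    · exact h2
    · linarith
  -- conclude
  intro k
  have hfk1 : f i1 ≤ f k := hmin k (Finset.mem_univ k)
  have hfk0 : f k ≤ f i0 := hmax k (Finset.mem_univ k)
  have hfi0 : f i0 ≤ 0 := div_nonpos_of_nonpos_of_nonneg hmax0 (hγ i0).le
  have hfi1 : 0 ≤ f i1 := div_nonneg hmin0 (hγ i1).le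
  have hfk : f k = 0 := le_antisymm (le_trans hfk0 hfi0) (le_trans hfi1 hfk1)
  have : κ k / γ k = 0 := hfk
  rcases div_eq_zero_iff.mp this with h | h
  · exact h
  · exact absurd h (ne_of_gt (hγ k))
end

section
/- Let N ≥ 1, let a₁,…,a_N ∈ ℝ³ be pairwise distinct, and let h, k, l, m and h_i, k_i, l_i, m_i (1 ≤ i ≤ N) be real numbers. On Ω := ℝ³ ∖ {a₁,…,a_N} set r_i(x) := ‖x − a_i‖ and define H := h + Σ_i h_i/r_i, K := k + Σ_i k_i/r_i, L := l + Σ_i l_i/r_i, M := m + Σ_i m_i/r_i. Let r_{ij} := ‖a_i − a_j‖ for i ≠ j, define on Ω the vector fields W_{ij} := (1/r_i)∇(1/r_j) − (1/r_j)∇(1/r_i) + (1/r_{ij})∇(1/r_i − 1/r_j) and the constants ω₋₁^i := h·m_i − m·h_i + (3/2)(k·l_i − l·k_i) + Σ_{j≠i}(h_j m_i − m_j h_i + (3/2)(k_j l_i − l_j k_i))/r_{ij}. Then at every point of Ω: H∇M − M∇H + (3/2)(K∇L − L∇K) = Σ_{i≠j}(h_i m_j + (3/2)k_i l_j)·W_{ij}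 + Σ_i ω₋₁^i·∇(1/r_i), where ∇ denotes the Euclidean gradient on ℝ³. -/
/-- The multi-centred function `x ↦ c + Σ_i cs_i/‖x − a_i‖` on `ℝ³`. -/
noncomputable def multiCentred {N : ℕ} (a : Fin N → EuclideanSpace ℝ (Fin 3))
    (c : ℝ) (cs : Fin N → ℝ) (x : EuclideanSpace ℝ (Fin 3)) : ℝ :=
  c + ∑ i, cs i / ‖x - a i‖

local notation "E3" => EuclideanSpace ℝ (Fin 3)

lemma aux_diffAt (a x : E3) (hx : x ≠ a) :
    DifferentiableAt ℝ (fun y : E3 => 1 / ‖y - a‖) x := by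
  have h1 : DifferentiableAt ℝ (fun y : E3 => ‖y - a‖) x :=
    (differentiableAt_id.sub_const a).norm ℝ (sub_ne_zero.mpr hx)
  simp only [one_div]
  exact h1.inv (norm_ne_zero_iff.mpr (sub_ne_zero.mpr hx))

lemma aux_gradient_sub (f g : E3 → ℝ) (x : E3) (hf : DifferentiableAt ℝ f x)
    (hg : DifferentiableAt ℝ g x) :
    gradient (fun y => f y - g y) x = gradient f x - gradient g x := by
  unfold gradient
  rw [fderiv_fun_sub hf hg, map_sub]

lemma aux_gradient_multi {N : ℕ} (a : Fin N → E3) (x : E3) (hx : ∀ i, x ≠ a i)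
    (c : ℝ) (cs : Fin N → ℝ) :
    gradient (multiCentred a c cs) x
      = ∑ i, cs i • gradient (fun y => 1 / ‖y - a i‖) x := by
  have hdiff : ∀ i : Fin N, DifferentiableAt ℝ (fun y : E3 => 1 / ‖y - a i‖) x :=
    fun i => aux_diffAt (a i) x (hx i)
  have heq : multiCentred a c cs = fun y => c + ∑ i, cs i * (1 / ‖y - a i‖) := by
    funext y
    unfold multiCentred
    congr 1
    exact Finset.sum_congr rfl fun i _ => (mul_one_div _ _).symm
  rw [heq]
  unfold gradient
  rw [fderiv_const_add, fderiv_fun_sum (fun i _ => (hdiff i).const_mul (cs i)), map_sum]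
  refine Finset.sum_congr rfl fun i _ => ?_
  rw [fderiv_const_mul (hdiff i), map_smul]

lemma aux_key {N : ℕ} {E : Type*} [AddCommGroup E] [Module ℝ E]
    (g : Fin N → E) (s : Fin N → ℝ) (t : Fin N → Fin N → ℝ) (ht : ∀ i j, t i j = t j i)
    (α : Fin N → ℝ) (c : Fin N → Fin N → ℝ) :
    (∑ i, ∑ j ∈ Finset.univ.erase i,
        c i j • (s i • g j - s j • g i + t i j • (g i - g j)))
      + ∑ i, (α i + ∑ j ∈ Finset.univ.erase i, (c j i - c i j) * t i j) • g i
    = ∑ j, (α j + ∑ i, s i * (c i j - c j i)) • g j := by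
  have h1 : ∀ i j : Fin N, c i j • (s i • g j - s j • g i + t i j • (g i - g j))
      = (c i j * s i - c i j * t i j) • g j + (c i j * t i j - c i j * s j) • g i := by
    intro i j; module
  simp only [h1, Finset.sum_add_distrib]
  have hswap : (∑ i, ∑ j ∈ Finset.univ.erase i, (c i j * s i - c i j * t i j) • g j)
      = ∑ j, ∑ i ∈ Finset.univ.erase j, (c i j * s i - c i j * t i j) • g j := by
    refine Finset.sum_comm' ?_
    intro i j
    simp only [Finset.mem_univ, Finset.mem_erase, true_and, and_true]
    exact ⟨fun h => h.symm, fun h => h.symm⟩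
  rw [hswap, ← Finset.sum_add_distrib, ← Finset.sum_add_distrib]
  refine Finset.sum_congr rfl fun j _ => ?_
  rw [← Finset.sum_smul, ← Finset.sum_smul, ← add_smul, ← add_smul]
  congr 1
  rw [← Finset.sum_erase (Finset.univ : Finset (Fin N))
      (show s j * (c j j - c j j) = 0 by ring)]
  have hsum : (∑ i ∈ Finset.univ.erase j, (c i j * s i - c i j * t i j))
      + (∑ i ∈ Finset.univ.erase j, (c j i * t j i - c j i * s i))
      + (∑ i ∈ Finset.univ.erase j, (c i j - c j i) * t j i)
      = ∑ i ∈ Finset.univ.erase j, s i * (c i j - c j i) := by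
    rw [← Finset.sum_add_distrib, ← Finset.sum_add_distrib]
    refine Finset.sum_congr rfl fun i _ => ?_
    rw [ht j i]; ring
  linarith [hsum]

/-- (Decomposition underlying `ω̂` in Theorem 2.)
With `H, K, L, M` the multi-centred functions, `W_{ij}` the vector fields
`(1/r_i)∇(1/r_j) − (1/r_j)∇(1/r_i) + (1/r_{ij})∇(1/r_i − 1/r_j)` and
`ω₋₁^i` the string-singularity coefficients, at every point of
`ℝ³ ∖ {a₁,…,a_N}` one has
`H∇M − M∇H + (3/2)(K∇L − L∇K)
  = Σ_{i≠j}(h_i m_j + (3/2)k_i l_j)·W_{ij} + Σ_i ω₋₁^i·∇(1/r_i)`. -/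
theorem omega_hat_decomposition (N : ℕ) (hN : 1 ≤ N)
    (a : Fin N → EuclideanSpace ℝ (Fin 3)) (ha : Function.Injective a)
    (h k l m : ℝ) (hc kc lc mc : Fin N → ℝ) :
    ∀ x : EuclideanSpace ℝ (Fin 3), (∀ i, x ≠ a i) →
      (multiCentred a h hc x) • gradient (multiCentred a m mc) x
          - (multiCentred a m mc x) • gradient (multiCentred a h hc) x
          + (3 / 2 : ℝ) • ((multiCentred a k kc x) • gradient (multiCentred a l lc) x
              - (multiCentred a l lc x) • gradient (multiCentred a k kc) x)
      = (∑ i, ∑ j ∈ Finset.univ.erase i,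
          (hc i * mc j + (3 / 2) * kc i * lc j) •
            ((1 / ‖x - a i‖) • gradient (fun y => 1 / ‖y - a j‖) x
              - (1 / ‖x - a j‖) • gradient (fun y => 1 / ‖y - a i‖) x
              + (1 / ‖a i - a j‖) •
                  gradient (fun y => 1 / ‖y - a i‖ - 1 / ‖y - a j‖) x))
        + ∑ i,
            (h * mc i - m * hc i + (3 / 2) * (k * lc i - l * kc i)
              + ∑ j ∈ Finset.univ.erase i,
                  (hc j * mc i - mc j * hc i + (3 / 2) * (kc j * lc i - lc j * kc i))
                    / ‖a i - a j‖) •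
              gradient (fun y => 1 / ‖y - a i‖) x := by
  intro x hx
  have hW : ∀ i j : Fin N,
      gradient (fun y : E3 => 1 / ‖y - a i‖ - 1 / ‖y - a j‖) x
        = gradient (fun y : E3 => 1 / ‖y - a i‖) x
            - gradient (fun y : E3 => 1 / ‖y - a j‖) x :=
    fun i j => aux_gradient_sub _ _ x (aux_diffAt (a i) x (hx i)) (aux_diffAt (a j) x (hx j))
  have hdiv : ∀ i j : Fin N,
      (hc j * mc i - mc j * hc i + (3 / 2) * (kc j * lc i - lc j * kc i)) / ‖a i - a j‖
      = ((hc j * mc i + (3 / 2) * kc j * lc i) - (hc i * mc j + (3 / 2) * kc i * lc j))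
          * (1 / ‖a i - a j‖) := by
    intro i j; ring
  simp only [hW, hdiv]
  have ht : ∀ i j : Fin N, (1 : ℝ) / ‖a i - a j‖ = 1 / ‖a j - a i‖ := by
    intro i j; rw [norm_sub_rev]
  have hkey := aux_key (fun i => gradient (fun y : E3 => 1 / ‖y - a i‖) x)
      (fun i => 1 / ‖x - a i‖) (fun i j => 1 / ‖a i - a j‖) ht
      (fun i => h * mc i - m * hc i + (3 / 2) * (k * lc i - l * kc i))
      (fun i j => hc i * mc j + (3 / 2) * kc i * lc j)
  have hscal : ∀ j : Fin N,
      multiCentred a h hc x * mc j - multiCentred a m mc x * hc j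
        + (3 / 2) * (multiCentred a k kc x * lc j - multiCentred a l lc x * kc j)
      = (h * mc j - m * hc j + (3 / 2) * (k * lc j - l * kc j))
        + ∑ i, (1 / ‖x - a i‖)
            * ((hc i * mc j + (3 / 2) * kc i * lc j)
                - (hc j * mc i + (3 / 2) * kc j * lc i)) := by
    intro j
    have hterm : ∀ i : Fin N, (1 / ‖x - a i‖)
        * ((hc i * mc j + (3 / 2) * kc i * lc j) - (hc j * mc i + (3 / 2) * kc j * lc i))
        = hc i / ‖x - a i‖ * mc j - mc i / ‖x - a i‖ * hc j
          + (3 / 2) * (kc i / ‖x - a i‖ * lc j - lc i / ‖x - a i‖ * kc j) := by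
      intro i; ring
    rw [Finset.sum_congr rfl fun i _ => hterm i]
    unfold multiCentred
    simp only [Finset.sum_add_distrib, Finset.sum_sub_distrib, ← Finset.sum_mul,
      ← Finset.mul_sum]
    ring
  have lhs_eq :
      (multiCentred a h hc x) • gradient (multiCentred a m mc) x
          - (multiCentred a m mc x) • gradient (multiCentred a h hc) x
          + (3 / 2 : ℝ) • ((multiCentred a k kc x) • gradient (multiCentred a l lc) x
              - (multiCentred a l lc x) • gradient (multiCentred a k kc) x)
      = ∑ j, ((h * mc j - m * hc j + (3 / 2) * (k * lc j - l * kc j))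
            + ∑ i, (1 / ‖x - a i‖)
                * ((hc i * mc j + (3 / 2) * kc i * lc j)
                    - (hc j * mc i + (3 / 2) * kc j * lc i))) •
          gradient (fun y => 1 / ‖y - a j‖) x := by
    rw [aux_gradient_multi a x hx m mc, aux_gradient_multi a x hx h hc,
        aux_gradient_multi a x hx l lc, aux_gradient_multi a x hx k kc]
    simp only [Finset.smul_sum, smul_smul, ← Finset.sum_sub_distrib, ← Finset.sum_add_distrib]
    refine Finset.sum_congr rfl fun j _ => ?_
    rw [← hscal j]
    module
  rw [lhs_eq]
  exact hkey.symm
end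

section
/- Let a, b ∈ ℝ³ be distinct and let β be the vector field of the previous statement, defined at points x with (a−b) × (x−b) ≠ 0 by β(x) = [((x−a)·(a−b))/(‖a−b‖·‖x−a‖) − ((x−b)·(a−b))/(‖a−b‖·‖x−b‖) − ((x−a)·(x−b))/(‖x−a‖·‖x−b‖) + 1]·((a−b) × (x−b))/‖(a−b) × (x−b)‖². Then β extends smoothly across the line through a and b: there exists a C^∞ map β̃ : ℝ³ ∖ {a, b} → ℝ³ such that β̃(x) = β(x) whenever (a−b) × (x−b) ≠ 0. -/
/-- Euclidean dot product on `ℝ³`. -/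
def dot3 (u v : Fin 3 → ℝ) : ℝ := ∑ i, u i * v i

/-- Euclidean norm on `ℝ³`. -/
noncomputable def norm3 (v : Fin 3 → ℝ) : ℝ := Real.sqrt (dot3 v v)

/-- Cross product on `ℝ³`. -/
def cross3 (u v : Fin 3 → ℝ) : Fin 3 → ℝ :=
  ![u 1 * v 2 - u 2 * v 1, u 2 * v 0 - u 0 * v 2, u 0 * v 1 - u 1 * v 0]

lemma dot3_self_nonneg (v : Fin 3 → ℝ) : 0 ≤ dot3 v v := by
  simp only [dot3, Fin.sum_univ_three]
  nlinarith [mul_self_nonneg (v 0), mul_self_nonneg (v 1), mul_self_nonneg (v 2)]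

lemma dot3_self_pos {v : Fin 3 → ℝ} (h : v ≠ 0) : 0 < dot3 v v := by
  have h' : v 0 ≠ 0 ∨ v 1 ≠ 0 ∨ v 2 ≠ 0 := by
    by_contra hc; push_neg at hc
    exact h (funext fun i => by fin_cases i <;> simp [hc.1, hc.2.1, hc.2.2])
  simp only [dot3, Fin.sum_univ_three]
  rcases h' with h'|h'|h' <;>
    nlinarith [mul_self_nonneg (v 0), mul_self_nonneg (v 1), mul_self_nonneg (v 2),
      mul_self_pos.2 h']

lemma norm3_sq (v : Fin 3 → ℝ) : (norm3 v)^2 = dot3 v v :=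
  Real.sq_sqrt (dot3_self_nonneg v)

lemma norm3_pos {v : Fin 3 → ℝ} (h : v ≠ 0) : 0 < norm3 v :=
  Real.sqrt_pos.2 (dot3_self_pos h)

lemma lagrange3 (u w : Fin 3 → ℝ) :
    dot3 (cross3 u w) (cross3 u w) = dot3 u u * dot3 w w - (dot3 u w)^2 := by
  simp [dot3, cross3, Fin.sum_univ_three]; ring

lemma cross3_self (u : Fin 3 → ℝ) : cross3 u u = 0 := by
  funext i; fin_cases i <;> simp [cross3] <;> ring

lemma cross3_zero_right (u : Fin 3 → ℝ) : cross3 u 0 = 0 := by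
  funext i; fin_cases i <;> simp [cross3]

lemma contDiff_dot_sub (a : Fin 3 → ℝ) :
    ContDiff ℝ (⊤:ℕ∞) (fun x : Fin 3 → ℝ => dot3 (x - a) (x - a)) := by
  unfold dot3
  apply ContDiff.sum
  intro i _
  simp only [Pi.sub_apply]
  exact (((ContinuousLinearMap.proj i : (Fin 3 → ℝ) →L[ℝ] ℝ).contDiff).sub contDiff_const).mul
    (((ContinuousLinearMap.proj i : (Fin 3 → ℝ) →L[ℝ] ℝ).contDiff).sub contDiff_const)

lemma contDiff_cross (u b : Fin 3 → ℝ) :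
    ContDiff ℝ (⊤:ℕ∞) (fun x : Fin 3 → ℝ => cross3 u (x - b)) := by
  rw [contDiff_pi]
  intro i
  fin_cases i <;> simp only [cross3, Pi.sub_apply, Matrix.cons_val_zero, Matrix.cons_val_one,
    Matrix.head_cons, Matrix.cons_val_two, Matrix.tail_cons] <;>
  · apply ContDiff.sub <;>
    exact contDiff_const.mul
      (((ContinuousLinearMap.proj _ : (Fin 3 → ℝ) →L[ℝ] ℝ).contDiff).sub contDiff_const)

lemma contDiffAt_norm3_sub {a x : Fin 3 → ℝ} (h : x ≠ a) :
    ContDiffAt ℝ (⊤:ℕ∞) (fun y : Fin 3 → ℝ => norm3 (y - a)) x := by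
  have hne : dot3 (x - a) (x - a) ≠ 0 :=
    ne_of_gt (dot3_self_pos (sub_ne_zero.2 h))
  exact (Real.contDiffAt_sqrt hne).comp x (contDiff_dot_sub a).contDiffAt

lemma key_identity (L A B s C : ℝ) (hL : L ≠ 0) (hA : A ≠ 0) (hB : B ≠ 0) (hC : C ≠ 0)
    (hS : L + A + B ≠ 0)
    (htri : A^2 = B^2 - 2*s + L^2) (hCeq : C = L^2*B^2 - s^2) :
    ((s - L^2)/(L*A) - s/(L*B) - (B^2 - s)/(A*B) + 1)/C = -2/(L*A*B*(L+A+B)) := by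
  subst hCeq
  field_simp
  ring_nf
  linear_combination (L*B - s) * htri

/-- (The 1-form `β_{ij}` is free of string singularities.)
For distinct `a, b ∈ ℝ³`, the vector field
`β(x) = Φ(x)·((a−b)×(x−b))/‖(a−b)×(x−b)‖²`, a priori defined only off the line
through `a` and `b`, extends to a `C^∞` map on `ℝ³ ∖ {a, b}`. -/
theorem beta_smooth_extension (a b : Fin 3 → ℝ) (hab : a ≠ b) :
    let rab : ℝ := norm3 (a - b)
    let ra : (Fin 3 → ℝ) → ℝ := fun x => norm3 (x - a)
    let rb : (Fin 3 → ℝ) → ℝ := fun x => norm3 (x - b)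
    let Φ : (Fin 3 → ℝ) → ℝ := fun x =>
      dot3 (x - a) (a - b) / (rab * ra x) - dot3 (x - b) (a - b) / (rab * rb x)
        - dot3 (x - a) (x - b) / (ra x * rb x) + 1
    let β : (Fin 3 → ℝ) → Fin 3 → ℝ := fun x =>
      (Φ x / dot3 (cross3 (a - b) (x - b)) (cross3 (a - b) (x - b))) • cross3 (a - b) (x - b)
    ∃ βt : (Fin 3 → ℝ) → Fin 3 → ℝ,
      ContDiffOn ℝ (⊤ : ℕ∞) βt ({a, b} : Set (Fin 3 → ℝ))ᶜ ∧
      ∀ x : Fin 3 → ℝ, cross3 (a - b) (x - b) ≠ 0 → βt x = β x := by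
  intro rab ra rb Φ β
  have hL : 0 < norm3 (a - b) := norm3_pos (sub_ne_zero.2 hab)
  refine ⟨fun x => (-2 / (norm3 (a-b) * norm3 (x-a) * norm3 (x-b) *
      (norm3 (a-b) + norm3 (x-a) + norm3 (x-b)))) • cross3 (a-b) (x-b), ?_, ?_⟩
  · intro x hx
    simp only [Set.mem_compl_iff, Set.mem_insert_iff, Set.mem_singleton_iff, not_or] at hx
    obtain ⟨hxa, hxb⟩ := hx
    have hA : 0 < norm3 (x - a) := norm3_pos (sub_ne_zero.2 hxa)
    have hB : 0 < norm3 (x - b) := norm3_pos (sub_ne_zero.2 hxb)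
    apply ContDiffAt.contDiffWithinAt
    have hca : ContDiffAt ℝ (⊤:ℕ∞) (fun y : Fin 3 → ℝ => norm3 (y - a)) x :=
      contDiffAt_norm3_sub hxa
    have hcb : ContDiffAt ℝ (⊤:ℕ∞) (fun y : Fin 3 → ℝ => norm3 (y - b)) x :=
      contDiffAt_norm3_sub hxb
    have hden : ContDiffAt ℝ (⊤:ℕ∞) (fun y : Fin 3 → ℝ => norm3 (a-b) * norm3 (y-a) *
        norm3 (y-b) * (norm3 (a-b) + norm3 (y-a) + norm3 (y-b))) x :=
      (((contDiffAt_const.mul hca).mul hcb).mul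
        ((contDiffAt_const.add hca).add hcb))
    have hdne : norm3 (a-b) * norm3 (x-a) * norm3 (x-b) *
        (norm3 (a-b) + norm3 (x-a) + norm3 (x-b)) ≠ 0 := by positivity
    exact (ContDiffAt.div contDiffAt_const hden hdne).smul (contDiff_cross (a-b) b).contDiffAt
  · intro x hc
    have hxa : x ≠ a := fun h => hc (by rw [h]; exact cross3_self _)
    have hxb : x ≠ b := fun h => hc (by rw [h, sub_self]; exact cross3_zero_right _)
    have hA : 0 < norm3 (x - a) := norm3_pos (sub_ne_zero.2 hxa)
    have hB : 0 < norm3 (x - b) := norm3_pos (sub_ne_zero.2 hxb)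
    have hCpos : 0 < dot3 (cross3 (a-b) (x-b)) (cross3 (a-b) (x-b)) := dot3_self_pos hc
    simp only [β, Φ, ra, rb, rab]
    set L := norm3 (a - b) with hLdef
    set A := norm3 (x - a) with hAdef
    set B := norm3 (x - b) with hBdef
    set s := dot3 (a - b) (x - b) with hs
    have hL2 : L^2 = dot3 (a-b) (a-b) := norm3_sq _
    have hA2 : A^2 = dot3 (x-a) (x-a) := norm3_sq _
    have hB2 : B^2 = dot3 (x-b) (x-b) := norm3_sq _
    have hd1 : dot3 (x - a) (a - b) = s - L^2 := by
      rw [hL2, hs]; simp only [dot3, Fin.sum_univ_three, Pi.sub_apply]; ring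
    have hd2 : dot3 (x - b) (a - b) = s := by
      rw [hs]; simp only [dot3, Fin.sum_univ_three, Pi.sub_apply]; ring
    have hd3 : dot3 (x - a) (x - b) = B^2 - s := by
      rw [hB2, hs]; simp only [dot3, Fin.sum_univ_three, Pi.sub_apply]; ring
    have htri : A^2 = B^2 - 2*s + L^2 := by
      rw [hA2, hB2, hL2, hs]; simp only [dot3, Fin.sum_univ_three, Pi.sub_apply]; ring
    have hCeq : dot3 (cross3 (a-b) (x-b)) (cross3 (a-b) (x-b)) = L^2*B^2 - s^2 := by
      rw [lagrange3, hL2, hB2, hs]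
    rw [hd1, hd2, hd3, hCeq]
    rw [hCeq] at hCpos
    congr 1
    exact (key_identity L A B s _ hL.ne' hA.ne' hB.ne' hCpos.ne'
      (by positivity) htri rfl).symm
end
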